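/- arXiv:2602.14395 — 8 statements merged into one kernel-verified Lean document; each statement's English description precedes it below -/
import Mathlib

section
/- Let P be a finite poset of distributive type. If α, β ∈ P have a common upper bound in P, then α and β have a greatest lower bound in P, i.e., there exists m ∈ P with m ≤ α, m ≤ β, and γ ≤ m for every γ ∈ P satisfying γ ≤ α and γ ≤ β. -/
/-- The partial order on `β` underlies a distributive lattice. -/
def IsDistribOrder (β : Type*) [inst : PartialOrder β] : Prop :=
  ∃ L : DistribLattice β, L.toLattice.toSemilatticeSup.toPartialOrder = inst

/-- A finite poset with a least element is of *distributive type* if every interval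
`[⊥, a]`, with the induced order, is a distributive lattice. -/
def DistribType (P : Type*) [PartialOrder P] [Fintype P] [OrderBot P] : Prop :=
  ∀ a : P, IsDistribOrder (Set.Icc (⊥ : P) a)

/-- Let `P` be a finite poset of distributive type.  If `α, β ∈ P` have a common upper
bound in `P`, then `α` and `β` have a greatest lower bound in `P`. -/
theorem statement1 {P : Type*} [PartialOrder P] [Fintype P] [OrderBot P]
    (hP : DistribType P) (α β : P) (hub : ∃ c, α ≤ c ∧ β ≤ c) :
    ∃ m : P, m ≤ α ∧ m ≤ β ∧ ∀ γ : P, γ ≤ α → γ ≤ β → γ ≤ m := by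
  obtain ⟨c, hαc, hβc⟩ := hub
  obtain ⟨L, hL⟩ := hP c
  have key : ∀ x y : Set.Icc (⊥ : P) c,
      @LE.le _ L.toLattice.toSemilatticeSup.toPartialOrder.toLE x y ↔ (x : P) ≤ (y : P) := by
    rw [hL]; exact fun _ _ => Iff.rfl
  let a : Set.Icc (⊥ : P) c := ⟨α, ⟨bot_le, hαc⟩⟩
  let b : Set.Icc (⊥ : P) c := ⟨β, ⟨bot_le, hβc⟩⟩
  let m := @SemilatticeInf.inf _ L.toLattice.toSemilatticeInf a b
  refine ⟨(m : P), ?_, ?_, ?_⟩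
  · exact (key m a).mp (@inf_le_left _ L.toLattice.toSemilatticeInf a b)
  · exact (key m b).mp (@inf_le_right _ L.toLattice.toSemilatticeInf a b)
  · intro γ hγα hγβ
    have hγ : γ ∈ Set.Icc (⊥ : P) c := ⟨bot_le, le_trans hγα hαc⟩
    exact (key ⟨γ, hγ⟩ m).mp (@le_inf _ L.toLattice.toSemilatticeInf ⟨γ, hγ⟩ a b
      ((key _ _).mpr hγα) ((key _ _).mpr hγβ))
end

section
/- Let P be a finite poset such that whenever p₁ < p₂ in P, every q ∈ P is comparable to p₁ or to p₂. Then P is pure, i.e., all maximal chains of P have the same cardinality. -/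
lemma aux_diff_le {P : Type*} [PartialOrder P] [Fintype P]
    (h : ∀ p₁ p₂ : P, p₁ < p₂ → ∀ q : P,
      (q ≤ p₁ ∨ p₁ ≤ q) ∨ (q ≤ p₂ ∨ p₂ ≤ q))
    (C₁ C₂ : Set P) (h₁ : IsMaxChain (· ≤ ·) C₁) (h₂ : IsMaxChain (· ≤ ·) C₂) :
    (C₁ \ C₂).ncard ≤ (C₂ \ C₁).ncard := by
  have hex : ∀ x : P, ∃ y : P, x ∈ C₁ \ C₂ → y ∈ C₂ \ C₁ ∧ ¬ x ≤ y ∧ ¬ y ≤ x := by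
    intro x
    by_cases hx : x ∈ C₁ \ C₂
    · -- x comparable to all of C₂ would force x ∈ C₂
      by_contra hcon
      push_neg at hcon
      have hall : ∀ y ∈ C₂, x ≤ y ∨ y ≤ x := by
        intro y hy
        by_contra hc
        push_neg at hc
        have hyC₁ : y ∉ C₁ := by
          intro hyC₁
          rcases eq_or_ne x y with rfl | hne
          · exact hc.1 le_rfl
          · rcases h₁.1 hx.1 hyC₁ hne with h' | h'
            · exact hc.1 h'
            · exact hc.2 h'
        exact hc.2 ((hcon y).2 ⟨hy, hyC₁⟩ hc.1)
      have hchain : IsChain (· ≤ ·) (insert x C₂) := by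
        apply h₂.1.insert
        intro y hy _
        exact hall y hy
      have := h₂.2 hchain (Set.subset_insert _ _)
      exact hx.2 (this ▸ Set.mem_insert x C₂)
    · exact ⟨x, fun hx' => absurd hx' hx⟩
  choose f hf using hex
  apply Set.ncard_le_ncard_of_injOn f (fun a ha => (hf a ha).1) ?_ (Set.toFinite _)
  intro x hx x' hx' hfe
  by_contra hne
  obtain ⟨_, hxy1, hxy2⟩ := hf x hx
  obtain ⟨_, hxy1', hxy2'⟩ := hf x' hx'
  rw [hfe] at hxy1 hxy2
  rcases h₁.1 hx.1 hx'.1 hne with hle | hle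
  · rcases h x x' (lt_of_le_of_ne hle hne) (f x') with (h' | h') | (h' | h')
    · exact hxy2 h'
    · exact hxy1 h'
    · exact hxy2' h'
    · exact hxy1' h'
  · rcases h x' x (lt_of_le_of_ne hle (Ne.symm hne)) (f x') with (h' | h') | (h' | h')
    · exact hxy2' h'
    · exact hxy1' h'
    · exact hxy2 h'
    · exact hxy1 h'

/-- Let `P` be a finite poset such that whenever `p₁ < p₂` in `P`, every `q ∈ P` is
comparable to `p₁` or to `p₂`.  Then `P` is pure: all maximal chains of `P` have the same
cardinality. -/
theorem statement2 {P : Type*} [PartialOrder P] [Fintype P]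
    (h : ∀ p₁ p₂ : P, p₁ < p₂ → ∀ q : P,
      (q ≤ p₁ ∨ p₁ ≤ q) ∨ (q ≤ p₂ ∨ p₂ ≤ q)) :
    ∀ C₁ C₂ : Set P, IsMaxChain (· ≤ ·) C₁ → IsMaxChain (· ≤ ·) C₂ →
      C₁.ncard = C₂.ncard := by
  intro C₁ C₂ h₁ h₂
  have e1 := aux_diff_le h C₁ C₂ h₁ h₂
  have e2 := aux_diff_le h C₂ C₁ h₂ h₁
  have hd : (C₁ \ C₂).ncard = (C₂ \ C₁).ncard := le_antisymm e1 e2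
  rw [← Set.ncard_inter_add_ncard_diff_eq_ncard C₁ C₂ (Set.toFinite _),
    ← Set.ncard_inter_add_ncard_diff_eq_ncard C₂ C₁ (Set.toFinite _),
    Set.inter_comm, hd]
end

section
/- Let P be a finite pure poset such that whenever p₁ < p₂ in P, every q ∈ P is comparable to p₁ or to p₂. If p, q ∈ P satisfy rank_P(p) + 1 = rank_P(q), then p < q. -/
/-- Let `P` be a finite pure poset (all maximal chains have the same cardinality) such that
whenever `p₁ < p₂` in `P`, every `q ∈ P` is comparable to `p₁` or to `p₂`.
If `p, q ∈ P` satisfy `rank_P(p) + 1 = rank_P(q)`, then `p < q`.  Here the rank of an element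
is its height, the largest `r` such that there is a chain `x₀ < x₁ < ⋯ < x_r = x`. -/
theorem statement3 {P : Type*} [PartialOrder P] [Fintype P]
    (hpure : ∀ C₁ C₂ : Set P, IsMaxChain (· ≤ ·) C₁ → IsMaxChain (· ≤ ·) C₂ →
      C₁.ncard = C₂.ncard)
    (h : ∀ p₁ p₂ : P, p₁ < p₂ → ∀ q : P,
      (q ≤ p₁ ∨ p₁ ≤ q) ∨ (q ≤ p₂ ∨ p₂ ≤ q))
    (p q : P) (hrk : Order.height p + 1 = Order.height q) :
    p < q := by
  have hfin : ∀ x : P, Order.height x < ⊤ := by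
    intro x
    refine lt_of_le_of_lt (Order.height_le fun s _ => ?_) (?_ : ((Fintype.card P : ℕ) : ℕ∞) < ⊤)
    · exact_mod_cast s.length_lt_card.le
    · exact_mod_cast ENat.coe_lt_top _
  obtain ⟨n, hn⟩ := WithTop.ne_top_iff_exists.mp (hfin p).ne
  have hn : Order.height p = (n : ℕ∞) := hn.symm
  rw [hn] at hrk
  have hq : Order.height q = (n : ℕ∞) + 1 := hrk.symm
  rw [show ((n : ℕ∞) + 1) = ((n + 1 : ℕ) : ℕ∞) by push_cast; ring] at hq
  obtain ⟨_, ⟨p', hp'q, hp'⟩, _⟩ := Order.height_eq_coe_add_one_iff.mp hq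
  have hne : Order.height p ≠ Order.height q := by
    rw [hn, hq]; exact_mod_cast Nat.ne_of_lt (Nat.lt_succ_self n)
  have heqpp' : ∀ (_ : p ≤ p' ∨ p' ≤ p), p = p' := by
    rintro (hle | hle)
    · rcases hle.lt_or_eq with hlt | rfl
      · exact absurd (Order.height_strictMono hlt (hn ▸ hfin p))
          (by rw [hn, hp']; simp)
      · rfl
    · rcases hle.lt_or_eq with hlt | rfl
      · exact absurd (Order.height_strictMono hlt (hp' ▸ hfin p'))
          (by rw [hn, hp']; simp)
      · rfl
  rcases h p' q hp'q p with (hc | hc) | (hc | hc)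
  · exact (heqpp' (Or.inl hc)) ▸ hp'q
  · exact (heqpp' (Or.inr hc)) ▸ hp'q
  · exact hc.lt_of_ne (fun e => hne (e ▸ rfl))
  · exact absurd (Order.height_mono hc) (by rw [hn, hq]; exact_mod_cast (by omega : ¬ n+1 ≤ n))
end

section
/- For a finite poset P the following conditions are equivalent: (i) whenever p₁ < p₂ in P, every q ∈ P is comparable to p₁ or to p₂; (ii) P is pure and for all p, q ∈ P, if rank_P(p) < rank_P(q) then p < q; (iii) P is the ordinal sum of antichains, i.e., for all x, y ∈ P one has x < y if and only if rank_P(x) < rank_P(y). -/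
section Aux

variable {P : Type*} [PartialOrder P] [Fintype P]

private lemma height_lt_top' (a : P) : Order.height a < ⊤ := by
  refine lt_of_le_of_lt (Order.height_le fun p _ => ?_) (ENat.coe_lt_top (Fintype.card P))
  exact_mod_cast p.length_lt_card.le

private lemma height_lt_of_lt {x y : P} (h : x < y) : Order.height x < Order.height y :=
  Order.height_strictMono h (height_lt_top' x)

/-- (HS) implies (i) -/
private lemma i_of_HS (hs : ∀ p q : P, Order.height p < Order.height q → p < q) :
    ∀ p₁ p₂ : P, p₁ < p₂ → ∀ q : P,
      (q ≤ p₁ ∨ p₁ ≤ q) ∨ (q ≤ p₂ ∨ p₂ ≤ q) := by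
  intro p₁ p₂ h q
  rcases lt_trichotomy (Order.height q) (Order.height p₁) with hlt | heq | hgt
  · exact Or.inl (Or.inl (hs _ _ hlt).le)
  · have : Order.height q < Order.height p₂ := heq ▸ height_lt_of_lt h
    exact Or.inr (Or.inl (hs _ _ this).le)
  · exact Or.inl (Or.inr (hs _ _ hgt).le)

/-- Under (i), incomparable elements have comparable heights one way. -/
private lemma height_le_of_incomp
    (hi : ∀ p₁ p₂ : P, p₁ < p₂ → ∀ q : P,
      (q ≤ p₁ ∨ p₁ ≤ q) ∨ (q ≤ p₂ ∨ p₂ ≤ q))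
    {x y : P} (hxy : ¬ x ≤ y) (hyx : ¬ y ≤ x) :
    Order.height x ≤ Order.height y := by
  apply Order.height_le
  intro p hp
  rcases Nat.eq_zero_or_pos p.length with h0 | hpos
  · simp [h0]
  · set n := p.length with hn
    have hidx : (⟨n - 1, by omega⟩ : Fin (p.length + 1)) < Fin.last p.length := by
      simp [Fin.lt_def]; omega
    set a : P := p ⟨n - 1, by omega⟩ with ha
    have hax : a < x := by
      have := p.strictMono hidx
      rwa [← RelSeries.last, hp] at this
    have hay : a < y := by
      rcases hi a x hax y with (h | h) | (h | h)
      · exact absurd (h.trans hax.le) hyx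
      · exact lt_of_le_of_ne h (fun he => hyx (he ▸ hax.le))
      · exact absurd h hyx
      · exact absurd h hxy
    have h1 : ((n - 1 : ℕ) : ℕ∞) ≤ Order.height a := by
      have := Order.index_le_height p ⟨n - 1, by omega⟩
      simpa using this
    have h2 : Order.height a < Order.height y := height_lt_of_lt hay
    have h3 : Order.height a + 1 ≤ Order.height y := Order.add_one_le_of_lt h2
    calc (n : ℕ∞) = ((n - 1 : ℕ) : ℕ∞) + 1 := by
              rw [show n = (n - 1) + 1 from by omega]; push_cast; ring
      _ ≤ Order.height a + 1 := by gcongr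
      _ ≤ Order.height y := h3

/-- (i) implies (HS) -/
private lemma HS_of_i
    (hi : ∀ p₁ p₂ : P, p₁ < p₂ → ∀ q : P,
      (q ≤ p₁ ∨ p₁ ≤ q) ∨ (q ≤ p₂ ∨ p₂ ≤ q)) :
    ∀ p q : P, Order.height p < Order.height q → p < q := by
  intro p q h
  by_cases hpq : p ≤ q
  · exact lt_of_le_of_ne hpq (fun he => absurd (he ▸ h) (lt_irrefl _))
  · by_cases hqp : q ≤ p
    · rcases eq_or_lt_of_le hqp with he | hlt
      · exact absurd (he ▸ h) (lt_irrefl _)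
      · exact absurd h (not_lt.mpr (height_lt_of_lt hlt).le)
    · exact absurd h (not_lt.mpr (height_le_of_incomp hi hqp hpq))

/-- Under (HS), every maximal chain has cardinality `H + 1` where `H` is the
maximal height. -/
private lemma maxChain_ncard [Nonempty P]
    (hs : ∀ p q : P, Order.height p < Order.height q → p < q)
    {C : Set P} (hC : IsMaxChain (· ≤ ·) C) {w : P}
    (hw : ∀ p : P, Order.height p ≤ Order.height w) :
    C.ncard = (Order.height w).toNat + 1 := by
  set n := (Order.height w).toNat with hn
  have hwn : Order.height w = (n : ℕ∞) := (ENat.coe_toNat (height_lt_top' w).ne).symm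
  -- a full-length series ending at w
  obtain ⟨p, hlast, hlen⟩ := Order.exists_series_of_height_eq_coe w hwn
  have hfull : p.length = Order.height p.last := by rw [hlast, hwn, hlen]
  have hto : ∀ c : P, Order.height c = ((Order.height c).toNat : ℕ∞) :=
    fun c => (ENat.coe_toNat (height_lt_top' c).ne).symm
  have hinj : Set.InjOn (fun c => (Order.height c).toNat) C := by
    intro c₁ h₁ c₂ h₂ he
    have he' : (Order.height c₁).toNat = (Order.height c₂).toNat := he
    have hh : Order.height c₁ = Order.height c₂ := by rw [hto c₁, hto c₂, he']
    by_contra hne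
    rcases hC.1 h₁ h₂ hne with hle | hle
    · exact absurd (hh ▸ height_lt_of_lt (lt_of_le_of_ne hle hne)) (lt_irrefl _)
    · exact absurd (hh ▸ height_lt_of_lt (lt_of_le_of_ne hle (Ne.symm hne)))
        (lt_irrefl _)
  have himg : (fun c => (Order.height c).toNat) '' C = Set.Iic n := by
    apply Set.Subset.antisymm
    · rintro m ⟨c, _, rfl⟩
      exact ENat.toNat_le_toNat (hw c) (height_lt_top' w).ne
    · intro m hm
      simp only [Set.mem_Iic] at hm
      by_contra hmem
      -- the element of height m on the series p
      set z : P := p ⟨m, by omega⟩ with hz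
      have hzh : Order.height z = (m : ℕ∞) := by
        have := Order.height_eq_index_of_length_eq_height_last hfull ⟨m, by omega⟩
        simpa using this
      have hcomp : ∀ c ∈ C, c ≠ z → c ≤ z ∨ z ≤ c := by
        intro c hc _
        have hcm : Order.height c ≠ (m : ℕ∞) := by
          intro he
          exact hmem ⟨c, hc, by show (Order.height c).toNat = m; rw [he]; simp⟩
        rcases lt_or_gt_of_ne hcm with hlt | hgt
        · exact Or.inl (hs _ _ (hzh ▸ hlt)).le
        · exact Or.inr (hs _ _ (hzh ▸ hgt)).le
      have hzC : z ∉ C := by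
        intro hzc
        exact hmem ⟨z, hzc, by show (Order.height z).toNat = m; rw [hzh]; simp⟩
      have hchain : IsChain (· ≤ ·) (insert z C) :=
        hC.1.insert (fun b hb hne => (hcomp b hb hne.symm).symm)
      have := hC.2 hchain (Set.subset_insert z C)
      exact hzC (this ▸ Set.mem_insert z C)
  calc C.ncard = ((fun c => (Order.height c).toNat) '' C).ncard :=
        (Set.ncard_image_of_injOn hinj).symm
    _ = (Set.Iic n).ncard := by rw [himg]
    _ = n + 1 := by
        rw [← Finset.coe_Iic, Set.ncard_coe_finset, Nat.card_Iic]

private lemma pure_of_HS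
    (hs : ∀ p q : P, Order.height p < Order.height q → p < q) :
    ∀ C₁ C₂ : Set P, IsMaxChain (· ≤ ·) C₁ → IsMaxChain (· ≤ ·) C₂ →
      C₁.ncard = C₂.ncard := by
  intro C₁ C₂ h₁ h₂
  cases isEmpty_or_nonempty P with
  | inl h =>
      have : ∀ C : Set P, C = ∅ := fun C => Set.eq_empty_of_isEmpty C
      rw [this C₁, this C₂]
  | inr h =>
      obtain ⟨w, hw⟩ := Finite.exists_max (fun p : P => Order.height p)
      rw [maxChain_ncard hs h₁ hw, maxChain_ncard hs h₂ hw]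

end Aux

/-- For a finite poset `P` the following are equivalent:
(i) whenever `p₁ < p₂` in `P`, every `q ∈ P` is comparable to `p₁` or to `p₂`;
(ii) `P` is pure (all maximal chains have the same cardinality) and for all `p, q ∈ P`,
`rank_P(p) < rank_P(q)` implies `p < q`;
(iii) `P` is the ordinal sum of antichains: for all `x, y ∈ P`, `x < y` iff
`rank_P(x) < rank_P(y)`.  Here the rank of an element is its height `Order.height`. -/
theorem statement4 {P : Type*} [PartialOrder P] [Fintype P] :
    ((∀ p₁ p₂ : P, p₁ < p₂ → ∀ q : P,
        (q ≤ p₁ ∨ p₁ ≤ q) ∨ (q ≤ p₂ ∨ p₂ ≤ q)) ↔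
      ((∀ C₁ C₂ : Set P, IsMaxChain (· ≤ ·) C₁ → IsMaxChain (· ≤ ·) C₂ →
          C₁.ncard = C₂.ncard) ∧
        ∀ p q : P, Order.height p < Order.height q → p < q)) ∧
    ((∀ p₁ p₂ : P, p₁ < p₂ → ∀ q : P,
        (q ≤ p₁ ∨ p₁ ≤ q) ∨ (q ≤ p₂ ∨ p₂ ≤ q)) ↔
      (∀ x y : P, x < y ↔ Order.height x < Order.height y)) := by
  constructor
  · constructor
    · intro hi
      exact ⟨pure_of_HS (HS_of_i hi), HS_of_i hi⟩
    · rintro ⟨-, hs⟩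
      exact i_of_HS hs
  · constructor
    · intro hi x y
      exact ⟨fun h => height_lt_of_lt h, fun h => HS_of_i hi _ _ h⟩
    · intro h3
      exact i_of_HS (fun p q h => (h3 p q).mpr h)
end

section
/- Let P be a finite poset of distributive type and K a field. Then the residue classes modulo J_P of the standard monomials — i.e., of the monomials x_{γ₁} x_{γ₂} ⋯ x_{γ_n} (n ≥ 0) with γ₁ ≤ γ₂ ≤ ⋯ ≤ γ_n a multichain in P, equivalently the monomials whose support is a totally ordered subset of P — form a K-vector space basis of the quotient ring R_K[P] = K[P]/J_P. -/
/-!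
Spanning is straightening. If the support of a monomial is not a chain, it contains incomparable
`α, β`, and modulo `J_P` the factor `x_α x_β` becomes `0` (no common upper bound) or
`x_{α∧β} Σ_γ x_γ`. Writing `D(x)` for the set of join-irreducibles below `x`, distributivity of
the intervals gives `D(α∧β) = D(α) ∩ D(β)` and `D(γ) = D(α) ∪ D(β)`, so `#D(α∧β) + #D(γ)` equals
`#D(α) + #D(β)` while `#D(α∧β)` is smaller than both; hence `Σ_x d_x (|P|² - #D(x)²)` drops.

Independence comes from the Hibi maps: for `c ∈ P`, sending `x_x ↦ t ∏_{q ∈ D(x)} y_q` for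
`x ≤ c` and `x_x ↦ 0` otherwise kills `J_P`, because below `c` the join of `α, β` in `[⊥, c]` is
their only minimal upper bound. A standard monomial supported below `c` goes to a monomial from
which it can be read off: the least element `α` of the chain is recovered from the variables of
full degree, which are `t` and the `y_q` with `q ∈ D(α)`, and `D` is injective by Birkhoff.
-/

open MvPolynomial

open scoped Classical in
/-- The ideal `J_P` of `K[P]` generated by the polynomials `f_{α,β}`:
if `α, β` have no common upper bound, `f_{α,β} = x_α x_β`; otherwise
`f_{α,β} = x_α x_β − x_{α∧β} (Σ_γ x_γ)`, where `α∧β` is the greatest lower bound of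
`α` and `β` in `P` and `γ` ranges over all minimal upper bounds of `α` and `β`. -/
noncomputable def posetIdeal (K : Type*) [Field K] (P : Type*) [PartialOrder P]
    [Fintype P] : Ideal (MvPolynomial P K) :=
  Ideal.span { f | ∃ α β : P,
    ((¬ ∃ c : P, α ≤ c ∧ β ≤ c) ∧ f = X α * X β) ∨
    ((∃ c : P, α ≤ c ∧ β ≤ c) ∧ ∃ m : P, IsGLB {α, β} m ∧
      f = X α * X β - X m *
        ∑ γ ∈ Finset.univ.filter
          (fun γ : P => α ≤ γ ∧ β ≤ γ ∧ ∀ δ : P, α ≤ δ → β ≤ δ → δ ≤ γ → δ = γ),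
          X γ) }

section DistribOrder

variable {β : Type*} [PartialOrder β]

theorem IsDistribOrder.exists_isLUB (h : IsDistribOrder β) (a b : β) : ∃ s, IsLUB {a, b} s := by
  obtain ⟨L, rfl⟩ := h
  exact ⟨a ⊔ b, isLUB_pair⟩

theorem IsDistribOrder.exists_isGLB (h : IsDistribOrder β) (a b : β) : ∃ m, IsGLB {a, b} m := by
  obtain ⟨L, rfl⟩ := h
  exact ⟨a ⊓ b, isGLB_pair⟩

theorem IsDistribOrder.isLUB_of_isGLB (h : IsDistribOrder β) {a b s q m₁ m₂ : β}
    (hs : IsLUB {a, b} s) (hqs : q ≤ s) (h₁ : IsGLB {q, a} m₁) (h₂ : IsGLB {q, b} m₂) :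
    IsLUB {m₁, m₂} q := by
  obtain ⟨L, rfl⟩ := h
  obtain rfl := hs.unique isLUB_pair
  obtain rfl := h₁.unique isGLB_pair
  obtain rfl := h₂.unique isGLB_pair
  convert isLUB_pair using 1
  rw [← inf_sup_left, inf_eq_left.2 hqs]

end DistribOrder

section IccTransfer

variable {P : Type*} [PartialOrder P] [OrderBot P] {c : P}

theorem isGLB_coe_of_isGLB_Icc {a b m : Set.Icc (⊥ : P) c} (h : IsGLB {a, b} m) :
    IsGLB {(a : P), (b : P)} (m : P) := by
  simp only [IsGLB, IsGreatest, lowerBounds_insert, lowerBounds_singleton, upperBounds,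
    Set.mem_inter_iff, Set.mem_Iic, Set.mem_ofPred_eq, Subtype.forall] at h ⊢
  exact ⟨h.1, fun z hz => h.2 z ⟨bot_le, hz.1.trans a.2.2⟩ hz⟩

theorem isLeast_coe_of_isLUB_Icc {a b s : Set.Icc (⊥ : P) c} (h : IsLUB {a, b} s) :
    IsLeast (upperBounds {(a : P), (b : P)} ∩ Set.Iic c) (s : P) := by
  simp only [IsLUB, IsLeast, upperBounds_insert, upperBounds_singleton, lowerBounds,
    Set.mem_inter_iff, Set.mem_Ici, Set.mem_Iic, Set.mem_ofPred_eq, Subtype.forall] at h ⊢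
  exact ⟨⟨h.1, s.2.2⟩, fun z hz => h.2 z ⟨bot_le, hz.2⟩ hz.1⟩

end IccTransfer

theorem minimal_of_isLeast_inter_Iic {α : Type*} [PartialOrder α] {S : Set α} {c s : α}
    (h : IsLeast (S ∩ Set.Iic c) s) : Minimal (· ∈ S) s :=
  ⟨h.1.1, fun _ hy hys => h.2 ⟨hy, hys.trans h.1.2⟩⟩

theorem Minimal.eq_of_isLeast_inter_Iic {α : Type*} [PartialOrder α] {S : Set α} {c s γ : α}
    (hγ : Minimal (· ∈ S) γ) (hγc : γ ≤ c) (h : IsLeast (S ∩ Set.Iic c) s) : γ = s :=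
  (hγ.eq_of_le h.1.1 (h.2 ⟨hγ.1, hγc⟩)).symm

namespace DistribType

variable {P : Type*} [PartialOrder P] [Fintype P] [OrderBot P]

theorem exists_isGLB (hP : DistribType P) {a b c : P} (ha : a ≤ c) (hb : b ≤ c) :
    ∃ m, IsGLB {a, b} m := by
  obtain ⟨m, hm⟩ := (hP c).exists_isGLB ⟨a, bot_le, ha⟩ ⟨b, bot_le, hb⟩
  exact ⟨m, isGLB_coe_of_isGLB_Icc hm⟩

theorem exists_isLeast (hP : DistribType P) {a b c : P} (ha : a ≤ c) (hb : b ≤ c) :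
    ∃ s, IsLeast (upperBounds {a, b} ∩ Set.Iic c) s := by
  obtain ⟨s, hs⟩ := (hP c).exists_isLUB ⟨a, bot_le, ha⟩ ⟨b, bot_le, hb⟩
  exact ⟨s, isLeast_coe_of_isLUB_Icc hs⟩

theorem minimal_of_isGLB (hP : DistribType P) {a b γ q m₁ m₂ : P}
    (hγ : Minimal (· ∈ upperBounds {a, b}) γ) (hqγ : q ≤ γ) (h₁ : IsGLB {q, a} m₁)
    (h₂ : IsGLB {q, b} m₂) :
    Minimal (· ∈ upperBounds {m₁, m₂}) q := by
  have haγ : a ≤ γ := hγ.1 (by simp)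
  have hbγ : b ≤ γ := hγ.1 (by simp)
  let a' : Set.Icc ⊥ γ := ⟨a, bot_le, haγ⟩
  let b' : Set.Icc ⊥ γ := ⟨b, bot_le, hbγ⟩
  let q' : Set.Icc ⊥ γ := ⟨q, bot_le, hqγ⟩
  obtain ⟨s, hs⟩ := (hP γ).exists_isLUB a' b'
  obtain ⟨m₁', hm₁'⟩ := (hP γ).exists_isGLB q' a'
  obtain ⟨m₂', hm₂'⟩ := (hP γ).exists_isGLB q' b'
  -- In `[⊥, γ]` we have `γ = a ⊔ b`, so `q = q ⊓ (a ⊔ b) = (q ⊓ a) ⊔ (q ⊓ b)`.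
  have hγs : γ = s := hγ.eq_of_isLeast_inter_Iic le_rfl (isLeast_coe_of_isLUB_Icc hs)
  obtain rfl := h₁.unique (isGLB_coe_of_isGLB_Icc hm₁')
  obtain rfl := h₂.unique (isGLB_coe_of_isGLB_Icc hm₂')
  have hq : IsLUB {m₁', m₂'} q' :=
    (hP γ).isLUB_of_isGLB hs (Subtype.mk_le_mk.2 (hγs ▸ hqγ)) hm₁' hm₂'
  exact minimal_of_isLeast_inter_Iic (isLeast_coe_of_isLUB_Icc hq)

end DistribType

section JoinIrred

open scoped Classical

variable {P : Type*} [PartialOrder P] [OrderBot P]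

/-- `q` is join-irreducible in the lattice `[⊥, q]`: a minimal upper bound `γ` of `a, b` is
their join in `[⊥, γ]`. -/
def IsJoinIrred (q : P) : Prop :=
  ⊥ < q ∧ ∀ a b, Minimal (· ∈ upperBounds {a, b}) q → a = q ∨ b = q

variable [Fintype P]

theorem IsJoinIrred.le_or_le (hP : DistribType P) {q a b γ : P} (hq : IsJoinIrred q)
    (hγ : Minimal (· ∈ upperBounds {a, b}) γ) (hqγ : q ≤ γ) : q ≤ a ∨ q ≤ b := by
  obtain ⟨m₁, h₁⟩ := hP.exists_isGLB hqγ (hγ.1 (by simp) : a ≤ γ)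
  obtain ⟨m₂, h₂⟩ := hP.exists_isGLB hqγ (hγ.1 (by simp) : b ≤ γ)
  rcases hq.2 m₁ m₂ (hP.minimal_of_isGLB hγ hqγ h₁ h₂) with rfl | rfl
  · exact Or.inl (h₁.1 (by simp))
  · exact Or.inr (h₂.1 (by simp))

noncomputable def joinIrredBelow (x : P) : Finset P :=
  Finset.univ.filter fun q => IsJoinIrred q ∧ q ≤ x

theorem mem_joinIrredBelow {q x : P} : q ∈ joinIrredBelow x ↔ IsJoinIrred q ∧ q ≤ x := by
  simp [joinIrredBelow]

theorem joinIrredBelow_mono : Monotone (joinIrredBelow (P := P)) :=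
  fun _ _ hxy _ hq => mem_joinIrredBelow.2
    ⟨(mem_joinIrredBelow.1 hq).1, (mem_joinIrredBelow.1 hq).2.trans hxy⟩

theorem joinIrredBelow_of_isGLB {a b m : P} (hm : IsGLB {a, b} m) :
    joinIrredBelow m = joinIrredBelow a ∩ joinIrredBelow b := by
  ext q
  simp only [Finset.mem_inter, mem_joinIrredBelow, le_isGLB_iff hm, lowerBounds_insert,
    lowerBounds_singleton, Set.mem_inter_iff, Set.mem_Iic]
  tauto

theorem DistribType.joinIrredBelow_of_minimal (hP : DistribType P) {a b γ : P}
    (hγ : Minimal (· ∈ upperBounds {a, b}) γ) :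
    joinIrredBelow γ = joinIrredBelow a ∪ joinIrredBelow b := by
  ext q
  simp only [Finset.mem_union, mem_joinIrredBelow]
  constructor
  · rintro ⟨hq, hqγ⟩
    exact (hq.le_or_le hP hγ hqγ).imp (fun h => ⟨hq, h⟩) (fun h => ⟨hq, h⟩)
  · rintro (⟨hq, hqa⟩ | ⟨hq, hqb⟩)
    · exact ⟨hq, hqa.trans (hγ.1 (by simp))⟩
    · exact ⟨hq, hqb.trans (hγ.1 (by simp))⟩

theorem DistribType.le_of_joinIrredBelow_subset (hP : DistribType P) {x y c : P} (hx : x ≤ c)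
    (hy : y ≤ c) (h : joinIrredBelow x ⊆ joinIrredBelow y) : x ≤ y := by
  induction x using WellFoundedLT.induction with
  | _ x ih =>
  rcases eq_bot_or_bot_lt x with rfl | hx₀
  · exact bot_le
  by_cases hirr : IsJoinIrred x
  · exact (mem_joinIrredBelow.1 (h (mem_joinIrredBelow.2 ⟨hirr, le_rfl⟩))).2
  obtain ⟨a, b, hab, hax, hbx⟩ :
      ∃ a b, Minimal (· ∈ upperBounds {a, b}) x ∧ a ≠ x ∧ b ≠ x := by
    simpa [IsJoinIrred, hx₀] using hirr
  have hax : a < x := lt_of_le_of_ne (hab.1 (by simp)) hax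
  have hbx : b < x := lt_of_le_of_ne (hab.1 (by simp)) hbx
  have hay := ih a hax (hax.le.trans hx) ((joinIrredBelow_mono hax.le).trans h)
  have hby := ih b hbx (hbx.le.trans hx) ((joinIrredBelow_mono hbx.le).trans h)
  obtain ⟨s, hs⟩ := hP.exists_isLeast (hax.le.trans hx) (hbx.le.trans hx)
  rw [hab.eq_of_isLeast_inter_Iic hx hs]
  exact hs.2 ⟨by simp [upperBounds, hay, hby], hy⟩

open Finset in
theorem DistribType.strictMono_card_joinIrredBelow (hP : DistribType P) :
    StrictMono fun x : P => #(joinIrredBelow x) := fun _ _ hxy =>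
  card_lt_card ⟨joinIrredBelow_mono hxy.le,
    fun h => hxy.not_ge (hP.le_of_joinIrredBelow_subset le_rfl hxy.le h)⟩

end JoinIrred

section Auxiliary

open Finsupp

theorem Nat.sq_add_sq_lt_of_add_eq {a b x y : ℕ} (h : a + b = x + y) (hx : a < x) (hy : a < y) :
    x ^ 2 + y ^ 2 < a ^ 2 + b ^ 2 := by
  zify at *
  nlinarith [mul_pos (sub_pos.2 hx) (sub_pos.2 hy)]

theorem Finsupp.single_add_single_le {σ : Type*} {d : σ →₀ ℕ} {a b : σ} (ha : a ∈ d.support)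
    (hb : b ∈ d.support) (hab : a ≠ b) : single a 1 + single b 1 ≤ d := fun x => by
  classical
  rw [Finsupp.mem_support_iff] at ha hb
  simp only [Finsupp.coe_add, Pi.add_apply, single_apply]
  split_ifs <;> subst_vars <;> first | omega | exact (hab rfl).elim

theorem MvPolynomial.monomial_single_add_single_add {σ : Type*} (K : Type*) [Field K] (a b : σ)
    (e : σ →₀ ℕ) :
    monomial (single a 1 + single b 1 + e) (1 : K) = X a * X b * monomial e 1 := by
  simp only [X, monomial_mul, mul_one]

theorem IsChain.exists_forall_le_of_nonempty {α : Type*} [PartialOrder α] {s : Finset α}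
    (hs : IsChain (· ≤ ·) (s : Set α))
    (hne : s.Nonempty) : ∃ a ∈ s, ∀ b ∈ s, a ≤ b := by
  obtain ⟨a, ha⟩ := s.exists_minimal hne
  exact ⟨a, ha.1, fun b hb => (hs.total ha.1 hb).elim id (ha.le_of_le hb)⟩

theorem IsChain.exists_forall_ge_of_nonempty {α : Type*} [PartialOrder α] {s : Finset α}
    (hs : IsChain (· ≤ ·) (s : Set α))
    (hne : s.Nonempty) : ∃ a ∈ s, ∀ b ∈ s, b ≤ a := by
  obtain ⟨a, ha⟩ := s.exists_maximal hne
  exact ⟨a, ha.1, fun b hb => (hs.total ha.1 hb).elim (ha.le_of_ge hb) id⟩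

end Auxiliary

section Generators

open scoped Classical
open Finset Finsupp

variable {P : Type*} [PartialOrder P] [Fintype P]

noncomputable def minimalUpperBounds (α β : P) : Finset P :=
  univ.filter fun γ => α ≤ γ ∧ β ≤ γ ∧ ∀ δ, α ≤ δ → β ≤ δ → δ ≤ γ → δ = γ

theorem mem_minimalUpperBounds {α β γ : P} :
    γ ∈ minimalUpperBounds α β ↔ Minimal (· ∈ upperBounds {α, β}) γ := by
  simp only [minimalUpperBounds, mem_filter, mem_univ, true_and, Minimal, upperBounds_insert,
    upperBounds_singleton, Set.mem_inter_iff, Set.mem_Ici, and_imp]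
  exact and_assoc.symm.trans (and_congr_right fun _ =>
    forall₃_congr fun δ _ _ => ⟨fun h hδ => (h hδ).ge, fun h hδ => le_antisymm hδ (h hδ)⟩)

variable (K : Type*) [Field K]

theorem X_mul_X_mem_posetIdeal {α β : P} (h : ¬ ∃ c, α ≤ c ∧ β ≤ c) :
    X α * X β ∈ posetIdeal K P :=
  Ideal.subset_span ⟨α, β, Or.inl ⟨h, rfl⟩⟩

theorem X_mul_X_sub_mem_posetIdeal {α β c m : P} (hα : α ≤ c) (hβ : β ≤ c)
    (hm : IsGLB {α, β} m) :
    X α * X β - X m * ∑ γ ∈ minimalUpperBounds α β, X γ ∈ posetIdeal K P :=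
  Ideal.subset_span ⟨α, β, Or.inr ⟨⟨c, hα, hβ⟩, m, hm, rfl⟩⟩

end Generators

abbrev Multichain (P : Type*) [PartialOrder P] :=
  {d : P →₀ ℕ // IsChain (· ≤ ·) (d.support : Set P)}

noncomputable def standardMonomial (K : Type*) [Field K] (P : Type*) [PartialOrder P]
    [Fintype P] (d : Multichain P) : MvPolynomial P K ⧸ posetIdeal K P :=
  Ideal.Quotient.mk (posetIdeal K P) (monomial d.1 1)

theorem Multichain.exists_upperBound {P : Type*} [PartialOrder P] [OrderBot P] (d : Multichain P) :
    ∃ c, ∀ x ∈ d.1.support, x ≤ c := by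
  rcases d.1.support.eq_empty_or_nonempty with h | h
  · exact ⟨⊥, by simp [h]⟩
  · obtain ⟨c, -, hc⟩ := d.2.exists_forall_ge_of_nonempty h
    exact ⟨c, hc⟩

section Weight

open scoped Classical
open Finset Finsupp

variable {P : Type*} [PartialOrder P] [Fintype P] [OrderBot P]

noncomputable def straighteningWeight : (P →₀ ℕ) →+ ℕ :=
  weight fun x => Fintype.card P ^ 2 - #(joinIrredBelow x) ^ 2

theorem DistribType.straighteningWeight_lt (hP : DistribType P) {α β m γ : P}
    (hαβ : ¬ α ≤ β) (hβα : ¬ β ≤ α) (hm : IsGLB {α, β} m)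
    (hγ : Minimal (· ∈ upperBounds {α, β}) γ) :
    straighteningWeight (single m 1 + single γ 1) <
      straighteningWeight (single α 1 + single β 1 : P →₀ ℕ) := by
  have hmα : m < α := lt_of_le_of_ne (hm.1 (by simp)) fun h => hαβ (h ▸ hm.1 (by simp))
  have hmβ : m < β := lt_of_le_of_ne (hm.1 (by simp)) fun h => hβα (h ▸ hm.1 (by simp))
  have hsum : #(joinIrredBelow m) + #(joinIrredBelow γ) =
      #(joinIrredBelow α) + #(joinIrredBelow β) := by
    rw [joinIrredBelow_of_isGLB hm, hP.joinIrredBelow_of_minimal hγ, add_comm,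
      card_union_add_card_inter]
  have hsq := Nat.sq_add_sq_lt_of_add_eq hsum (hP.strictMono_card_joinIrredBelow hmα)
    (hP.strictMono_card_joinIrredBelow hmβ)
  have hle : ∀ x : P, #(joinIrredBelow x) ^ 2 ≤ Fintype.card P ^ 2 :=
    fun x => Nat.pow_le_pow_left (card_le_univ _) 2
  have := hle α; have := hle β; have := hle m; have := hle γ
  simp only [straighteningWeight, map_add, weight_single, one_smul]
  omega

end Weight

section Straightening

open scoped Classical
open Finset Finsupp Submodule

variable {P : Type*} [PartialOrder P] [Fintype P] [OrderBot P] (K : Type*) [Field K]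

theorem DistribType.mk_monomial_mem_span (hP : DistribType P) (d : P →₀ ℕ) :
    Ideal.Quotient.mk (posetIdeal K P) (monomial d 1) ∈
      span K (Set.range (standardMonomial K P)) := by
  by_cases hd : IsChain (· ≤ ·) (d.support : Set P)
  · exact subset_span ⟨⟨d, hd⟩, rfl⟩
  obtain ⟨α, hα, β, hβ, hne, hαβ, hβα⟩ :
      ∃ α ∈ d.support, ∃ β ∈ d.support, α ≠ β ∧ ¬ α ≤ β ∧ ¬ β ≤ α := by
    simpa [IsChain, Set.Pairwise] using hd
  obtain ⟨e, rfl⟩ : ∃ e, d = single α 1 + single β 1 + e :=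
    ⟨_, (add_tsub_cancel_of_le (single_add_single_le hα hβ hne)).symm⟩
  rw [monomial_single_add_single_add, map_mul]
  by_cases hub : ∃ c, α ≤ c ∧ β ≤ c
  · obtain ⟨c, hαc, hβc⟩ := hub
    obtain ⟨m, hm⟩ := hP.exists_isGLB hαc hβc
    rw [Ideal.Quotient.eq.2 (X_mul_X_sub_mem_posetIdeal K hαc hβc hm), ← map_mul, mul_assoc,
      Finset.sum_mul, Finset.mul_sum, map_sum]
    refine sum_mem fun γ hγ => ?_
    rw [← mul_assoc, ← monomial_single_add_single_add]
    exact hP.mk_monomial_mem_span _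
  · rw [Ideal.Quotient.eq_zero_iff_mem.2 (X_mul_X_mem_posetIdeal K hub), zero_mul]
    exact zero_mem _
termination_by straighteningWeight d
decreasing_by
  subst_vars
  simpa only [map_add] using Nat.add_lt_add_right
    (hP.straighteningWeight_lt hαβ hβα hm (mem_minimalUpperBounds.1 hγ)) (straighteningWeight e)

theorem DistribType.span_standardMonomial (hP : DistribType P) :
    span K (Set.range (standardMonomial K P)) = ⊤ := by
  refine eq_top_iff'.2 fun z => ?_
  obtain ⟨p, rfl⟩ := Ideal.Quotient.mk_surjective z
  induction p using MvPolynomial.induction_on' with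
  | monomial d a =>
    rw [← mul_one a, ← smul_eq_mul, ← smul_monomial, ← Ideal.Quotient.mkₐ_eq_mk K, map_smul]
    exact smul_mem _ a (hP.mk_monomial_mem_span K d)
  | add p q hp hq =>
    rw [map_add]
    exact add_mem hp hq

end Straightening

section Hibi

open scoped Classical
open Finset Finsupp

variable {P : Type*} [PartialOrder P] [Fintype P] [OrderBot P]

/-- The exponent of `t ∏_{q ∈ D(x)} y_q`, where `D(x)` is the set of join-irreducibles below `x`,
`t = X none` and `y_q = X (some q)`. -/
noncomputable def hibiExponent (x : P) : Option P →₀ ℕ :=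
  indicator (insertNone (joinIrredBelow x)) fun _ _ => 1

theorem hibiExponent_apply (x : P) (v : Option P) :
    hibiExponent x v = if v ∈ insertNone (joinIrredBelow x) then 1 else 0 := by
  simp [hibiExponent, indicator_apply]

theorem weight_hibiExponent_apply (d : P →₀ ℕ) (v : Option P) :
    weight hibiExponent d v =
      ∑ x ∈ d.support, if v ∈ insertNone (joinIrredBelow x) then d x else 0 := by
  simp [weight_apply, Finsupp.sum, hibiExponent_apply]

theorem weight_hibiExponent_none (d : P →₀ ℕ) : weight hibiExponent d none = degree d := by
  simp [weight_hibiExponent_apply, degree_apply]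

theorem weight_hibiExponent_eq_degree_iff {d : P →₀ ℕ} {α : P} (hα : α ∈ d.support)
    (hle : ∀ x ∈ d.support, α ≤ x) (v : Option P) :
    weight hibiExponent d v = degree d ↔ v ∈ insertNone (joinIrredBelow α) := by
  rw [weight_hibiExponent_apply, degree_apply]
  refine ⟨fun h => by_contra fun hv => h.not_lt (sum_lt_sum (fun x _ => ?_) ⟨α, hα, ?_⟩),
    fun hv => sum_congr rfl fun x hx => if_pos (insertNone.monotone
      (joinIrredBelow_mono (hle x hx)) hv)⟩
  · split_ifs <;> simp
  · rw [if_neg hv]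
    exact Nat.pos_of_ne_zero (Finsupp.mem_support_iff.1 hα)

theorem DistribType.eq_of_weight_hibiExponent_eq (hP : DistribType P) {c : P} {d d' : P →₀ ℕ}
    (hd : IsChain (· ≤ ·) (d.support : Set P)) (hd' : IsChain (· ≤ ·) (d'.support : Set P))
    (hdc : ∀ x ∈ d.support, x ≤ c) (hd'c : ∀ x ∈ d'.support, x ≤ c)
    (h : weight hibiExponent d = weight hibiExponent d') : d = d' := by
  have hdeg : degree d = degree d' := by
    rw [← weight_hibiExponent_none, h, weight_hibiExponent_none]
  rcases eq_or_ne d 0 with rfl | hne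
  · exact ((degree_eq_zero_iff d').1 (hdeg.symm.trans (map_zero _))).symm
  have hne' : d' ≠ 0 := fun h' => hne ((degree_eq_zero_iff d).1 (hdeg.trans (h' ▸ map_zero _)))
  obtain ⟨α, hα, hαle⟩ := hd.exists_forall_le_of_nonempty (support_nonempty_iff.2 hne)
  obtain ⟨α', hα', hα'le⟩ := hd'.exists_forall_le_of_nonempty (support_nonempty_iff.2 hne')
  have hD : joinIrredBelow α = joinIrredBelow α' := insertNone.injective <| by
    ext v
    rw [← weight_hibiExponent_eq_degree_iff hα hαle, ← weight_hibiExponent_eq_degree_iff hα' hα'le,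
      h, hdeg]
  obtain rfl : α = α' := le_antisymm (hP.le_of_joinIrredBelow_subset (hdc α hα) (hd'c α' hα') hD.le)
    (hP.le_of_joinIrredBelow_subset (hd'c α' hα') (hdc α hα) hD.ge)
  have hsplit : ∀ {e : P →₀ ℕ}, α ∈ e.support → single α 1 + (e - single α 1) = e := fun he =>
    add_tsub_cancel_of_le <| single_le_iff.2 <|
      Nat.one_le_iff_ne_zero.2 (Finsupp.mem_support_iff.1 he)
  have hrest : d - single α 1 = d' - single α 1 := by
    refine hP.eq_of_weight_hibiExponent_eq (hd.mono support_tsub) (hd'.mono support_tsub)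
      (fun x hx => hdc x (support_tsub hx)) (fun x hx => hd'c x (support_tsub hx)) ?_
    rw [← hsplit hα, ← hsplit hα', map_add, map_add] at h
    exact add_left_cancel h
  rw [← hsplit hα, ← hsplit hα', hrest]
termination_by degree d
decreasing_by
  conv_rhs => rw [← hsplit hα]
  rw [map_add, degree_single]
  omega

end Hibi

section HibiMap

open scoped Classical
open Finset Finsupp

variable {P : Type*} [PartialOrder P] [Fintype P] [OrderBot P] (K : Type*) [Field K]

noncomputable def hibiMap (c : P) : MvPolynomial P K →ₐ[K] MvPolynomial (Option P) K :=
  aeval fun x => if x ≤ c then monomial (hibiExponent x) 1 else 0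

theorem hibiMap_X (c x : P) :
    hibiMap K c (X x) = if x ≤ c then monomial (hibiExponent x) 1 else 0 :=
  aeval_X _ x

theorem hibiMap_monomial (c : P) (d : P →₀ ℕ) :
    hibiMap K c (monomial d 1) =
      if ∀ x ∈ d.support, x ≤ c then monomial (weight hibiExponent d) 1 else 0 := by
  rw [hibiMap, aeval_monomial, map_one, one_mul, Finsupp.prod]
  split_ifs with h
  · rw [weight_apply, Finsupp.sum, monomial_sum_one]
    exact prod_congr rfl fun x hx => by rw [if_pos (h x hx), monomial_pow, one_pow]
  · obtain ⟨x, hx, hxc⟩ := not_forall₂.1 h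
    exact prod_eq_zero hx (by rw [if_neg hxc, zero_pow (Finsupp.mem_support_iff.1 hx)])

theorem DistribType.hibiExponent_add_hibiExponent (hP : DistribType P) {α β m γ : P}
    (hm : IsGLB {α, β} m) (hγ : Minimal (· ∈ upperBounds {α, β}) γ) :
    hibiExponent α + hibiExponent β = hibiExponent m + hibiExponent γ := by
  ext (_ | q)
  · simp [hibiExponent_apply]
  · simp only [Finsupp.coe_add, Pi.add_apply, hibiExponent_apply, joinIrredBelow_of_isGLB hm,
      hP.joinIrredBelow_of_minimal hγ, some_mem_insertNone, mem_inter, mem_union]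
    split_ifs <;> tauto

theorem DistribType.hibiMap_X_mul_X_sub (hP : DistribType P) (c : P) {α β m : P}
    (hm : IsGLB {α, β} m) :
    hibiMap K c (X α * X β - X m * ∑ γ ∈ minimalUpperBounds α β, X γ) = 0 := by
  rw [map_sub, map_mul, map_mul, map_sum, sub_eq_zero]
  by_cases hαβ : α ≤ c ∧ β ≤ c
  · obtain ⟨s, hs⟩ := hP.exists_isLeast hαβ.1 hαβ.2
    have hsmin := minimal_of_isLeast_inter_Iic hs
    rw [sum_eq_single_of_mem s (mem_minimalUpperBounds.2 hsmin) fun γ hγ hγs => by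
      rw [hibiMap_X, if_neg fun hγc =>
        hγs ((mem_minimalUpperBounds.1 hγ).eq_of_isLeast_inter_Iic hγc hs)]]
    simp only [hibiMap_X, if_pos hαβ.1, if_pos hαβ.2, if_pos ((hm.1 (by simp)).trans hαβ.1),
      if_pos (show s ≤ c from hs.1.2), monomial_mul, mul_one,
      hP.hibiExponent_add_hibiExponent hm hsmin]
  · have hγ : ∀ γ ∈ minimalUpperBounds α β, hibiMap K c (X γ) = 0 := fun γ hγ => by
      have hγ := (mem_minimalUpperBounds.1 hγ).1
      rw [hibiMap_X, if_neg fun hγc => hαβ ⟨(hγ (by simp)).trans hγc, (hγ (by simp)).trans hγc⟩]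
    rw [sum_eq_zero hγ, mul_zero]
    rcases not_and_or.1 hαβ with h | h
    · rw [hibiMap_X K c α, if_neg h, zero_mul]
    · rw [hibiMap_X K c β, if_neg h, mul_zero]

theorem DistribType.hibiMap_eq_zero_of_mem (hP : DistribType P) (c : P) {p : MvPolynomial P K}
    (hp : p ∈ posetIdeal K P) : hibiMap K c p = 0 := by
  refine (Ideal.span_le (I := RingHom.ker (hibiMap K c))).2 ?_ hp
  rintro _ ⟨α, β, ⟨hub, rfl⟩ | ⟨-, m, hm, rfl⟩⟩
  · rw [SetLike.mem_coe, RingHom.mem_ker, map_mul, hibiMap_X, hibiMap_X]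
    by_cases hα : α ≤ c
    · rw [if_neg fun hβ => hub ⟨c, hα, hβ⟩, mul_zero]
    · rw [if_neg hα, zero_mul]
  · exact hP.hibiMap_X_mul_X_sub K c hm

end HibiMap

section Independence

open scoped Classical
open Finsupp Submodule

variable {P : Type*} [PartialOrder P] [Fintype P] [OrderBot P] (K : Type*) [Field K]

theorem DistribType.linearIndependent_standardMonomial (hP : DistribType P) :
    LinearIndependent K (standardMonomial K P) := by
  choose c hc using fun d : Multichain P => d.exists_upperBound
  let coord (d : Multichain P) : Module.Dual K (MvPolynomial P K ⧸ posetIdeal K P) :=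
    (lcoeff K (weight hibiExponent d.1)).comp
      (Ideal.Quotient.liftₐ _ (hibiMap K (c d)) fun _ => hP.hibiMap_eq_zero_of_mem K _).toLinearMap
  have hcoord (d e : Multichain P) : coord d (standardMonomial K P e) =
      if (∀ x ∈ e.1.support, x ≤ c d) ∧ weight hibiExponent e.1 = weight hibiExponent d.1
      then 1 else 0 := by
    change coeff _ (hibiMap K (c d) (monomial e.1 1)) = _
    rw [hibiMap_monomial]
    split_ifs <;> simp_all [coeff_monomial]
  refine .of_pairwise_dual_eq_zero_one _ coord (fun d e hde => ?_) fun d => ?_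
  · change coord d (standardMonomial K P e) = 0
    rw [hcoord, if_neg]
    rintro ⟨he, hw⟩
    exact hde (Subtype.ext (hP.eq_of_weight_hibiExponent_eq e.2 d.2 he (hc d) hw)).symm
  · rw [hcoord, if_pos ⟨hc d, rfl⟩]

end Independence

/-- Let `P` be a finite poset of distributive type and `K` a field.  The residue classes
modulo `J_P` of the standard monomials, i.e. of the monomials whose support is a totally
ordered subset (chain) of `P`, form a `K`-vector space basis of `R_K[P] = K[P]/J_P`. -/
theorem statement5 {P : Type*} [PartialOrder P] [Fintype P] [OrderBot P]
    (hP : DistribType P) (K : Type*) [Field K] :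
    LinearIndependent K
      (fun d : {d : P →₀ ℕ // IsChain (· ≤ ·) (d.support : Set P)} =>
        Ideal.Quotient.mk (posetIdeal K P) (MvPolynomial.monomial d.1 (1 : K))) ∧
    Submodule.span K
      (Set.range (fun d : {d : P →₀ ℕ // IsChain (· ≤ ·) (d.support : Set P)} =>
        Ideal.Quotient.mk (posetIdeal K P) (MvPolynomial.monomial d.1 (1 : K)))) = ⊤ :=
  ⟨hP.linearIndependent_standardMonomial K, hP.span_standardMonomial K⟩
end

section
/- Let L be a finite distributive lattice with at least three elements that is simple (has no apex). Then the comparability graph of L is chordal if and only if there exists n ≥ 1 such that L is order-isomorphic to the product Fin 2 × Fin (n+1) of a two-element chain and an (n+1)-element chain with componentwise order (i.e., to the divisor lattice D_{2·3^n}). -/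
/-- The comparability graph of a poset: two distinct elements are adjacent iff they are
comparable. -/
def compGraph (Q : Type*) [PartialOrder Q] : SimpleGraph Q where
  Adj x y := x ≠ y ∧ (x ≤ y ∨ y ≤ x)
  symm := ⟨fun _ _ h => ⟨h.1.symm, h.2.symm⟩⟩
  loopless := ⟨fun _ h => h.1 rfl⟩

/-- `f` is an induced cycle of length `n` in `G`, with vertices indexed by `ZMod n`:
`f` is injective and two vertices of the cycle are adjacent iff they are consecutive. -/
def IsInducedCycle {V : Type*} (G : SimpleGraph V) (n : ℕ) (f : ZMod n → V) : Prop :=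
  Function.Injective f ∧ ∀ i j : ZMod n, G.Adj (f i) (f j) ↔ (j = i + 1 ∨ i = j + 1)

/-- A graph is chordal if it has no induced cycle of length at least 4. -/
def SimpleGraph.Chordal {V : Type*} (G : SimpleGraph V) : Prop :=
  ¬ ∃ (n : ℕ) (f : ZMod n → V), 4 ≤ n ∧ IsInducedCycle G n f

/-!
If `L ≃o Fin 2 × C` with `C` a chain, two elements with the same first coordinate are
comparable, so the comparability graph is covered by two cliques. On an induced cycle of length
`n ≥ 5`, positions `i` and `i + 2` then get different cliques, so `i` and `i + 4` get the same
one; this forces `n = 5`, where it makes all positions share a clique.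
An induced 4-cycle of a comparability graph is a crown (two incomparable elements below two
incomparable elements), and the two upper (or lower) elements of a crown in `Fin 2 × C` share
their first coordinate.

Conversely, let the comparability graph be chordal. As `L` has no apex it has two atoms and two
coatoms; they do not form a crown, so some atom `a` is not below some coatom `v`. Then `a` and
`v` are complements, and distributivity gives `L ≃o Iic a × Iic v` with `Iic a` a two-element
chain. If `x, y ≤ v` were incomparable, then, by distributivity, none of `x, y, a` lies below
the join of the other two, so `S ↦ ⨆ S` embeds the Boolean lattice on three points into `L`,
and its hexagon `{0}, {0,1}, {1}, {1,2}, {2}, {2,0}` is an induced 6-cycle. Hence `Iic v` is a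
chain.
-/

section Graph

variable {V W : Type*} {G : SimpleGraph V} {H : SimpleGraph W}

theorem IsInducedCycle.map {n : ℕ} {f : ZMod n → V} (hf : IsInducedCycle G n f) (φ : G ↪g H) :
    IsInducedCycle H n (φ ∘ f) :=
  ⟨φ.injective.comp hf.1, fun i j => φ.map_adj_iff.trans (hf.2 i j)⟩

theorem SimpleGraph.Chordal.comap (hH : H.Chordal) (φ : G ↪g H) : G.Chordal :=
  fun ⟨n, f, hn, hf⟩ => hH ⟨n, φ ∘ f, hn, hf.map φ⟩

/-- A cycle of length at least 5 is not covered by two cliques. -/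
theorem ZMod.exists_eq_of_fin_two_of_five_le {n : ℕ} (hn : 5 ≤ n) (t : ZMod n → Fin 2) :
    ∃ i j, t i = t j ∧ i ≠ j ∧ j ≠ i + 1 ∧ i ≠ j + 1 := by
  by_contra! h
  have hcast : ∀ c : ℕ, 0 < c → c < 5 → (c : ZMod n) ≠ 0 := fun c hc0 hc5 hc =>
    absurd (Nat.le_of_dvd hc0 ((ZMod.natCast_eq_zero_iff c n).1 hc)) (by omega)
  have h1 : (1 : ZMod n) ≠ 0 := by exact_mod_cast hcast 1 (by norm_num) (by norm_num)
  have h2 : (2 : ZMod n) ≠ 0 := by exact_mod_cast hcast 2 (by norm_num) (by norm_num)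
  have h3 : (3 : ZMod n) ≠ 0 := by exact_mod_cast hcast 3 (by norm_num) (by norm_num)
  have h4 : (4 : ZMod n) ≠ 0 := by exact_mod_cast hcast 4 (by norm_num) (by norm_num)
  have hshift : ∀ i c, t (i + c) = t i → c = 0 ∨ c - 1 = 0 ∨ c + 1 = 0 := by
    intro i c htc
    by_contra! hc
    have hne : i ≠ i + c + 1 := fun h' => hc.2.2 (by linear_combination -h')
    exact hc.2.1 (by linear_combination h (i + c) i htc (by simpa using hc.1) hne)
  have two : ∀ i, t (i + 2) ≠ t i := fun i hi => by
    rcases hshift i 2 hi with h | h | h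
    · exact h2 h
    · exact h1 (by linear_combination h)
    · exact h3 (by linear_combination h)
  have four : ∀ i, t (i + 4) = t i := fun i => by
    have h₁ := two (i + 2)
    have h₂ := two i
    rw [add_assoc, show (2 : ZMod n) + 2 = 4 by norm_num] at h₁
    omega
  have five : (5 : ZMod n) = 0 := by
    rcases hshift 0 4 (four 0) with h | h | h
    · exact absurd h h4
    · exact absurd (by linear_combination h) h3
    · linear_combination h
  have step : ∀ i, t (i + 1) = t i := fun i => by
    rw [← four (i + 1), add_assoc, show (1 : ZMod n) + 4 = 0 by linear_combination five, add_zero]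
  exact two 0 (by rw [show (0 : ZMod n) + 2 = 0 + 1 + 1 by ring, step, step])

end Graph

section ComparabilityGraph

variable {P Q : Type*} [PartialOrder P] [PartialOrder Q]

@[simp]
theorem compGraph_adj {x y : P} : (compGraph P).Adj x y ↔ x ≠ y ∧ (x ≤ y ∨ y ≤ x) := Iff.rfl

instance [DecidableEq P] [DecidableLE P] : DecidableRel (compGraph P).Adj :=
  fun x y => inferInstanceAs (Decidable (x ≠ y ∧ (x ≤ y ∨ y ≤ x)))

def OrderEmbedding.compGraphEmbedding (φ : P ↪o Q) : compGraph P ↪g compGraph Q where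
  toEmbedding := φ.toEmbedding
  map_rel_iff' := by simp [φ.injective.ne_iff]

theorem IsInducedCycle.comparable_iff {n : ℕ} {f : ZMod n → P}
    (hf : IsInducedCycle (compGraph P) n f) (i j : ZMod n) :
    (f i ≤ f j ∨ f j ≤ f i) ↔ (i = j ∨ j = i + 1 ∨ i = j + 1) := by
  by_cases hij : i = j
  · simp [hij]
  · simpa [hij, hf.1.ne hij] using hf.2 i j

theorem le_and_le_or_le_and_le_of_not_comparable {x y z : P} (hxy : ¬ (x ≤ y ∨ y ≤ x))
    (hxz : x ≤ z ∨ z ≤ x) (hyz : y ≤ z ∨ z ≤ y) : (x ≤ z ∧ y ≤ z) ∨ (z ≤ x ∧ z ≤ y) := by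
  rcases hxz with hxz | hzx <;> rcases hyz with hyz | hzy
  · exact .inl ⟨hxz, hyz⟩
  · exact absurd (.inl (hxz.trans hzy)) hxy
  · exact absurd (.inr (hyz.trans hzx)) hxy
  · exact .inr ⟨hzx, hzy⟩

theorem not_chordal_of_crown {x y p q : P} (hxy : ¬ x ≤ y) (hyx : ¬ y ≤ x)
    (hpq : ¬ p ≤ q) (hqp : ¬ q ≤ p) (hxp : x ≤ p) (hxq : x ≤ q) (hyp : y ≤ p) (hyq : y ≤ q) :
    ¬ (compGraph P).Chordal := by
  have hpx : ¬ p ≤ x := fun h => hyx (hyp.trans h)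
  have hqx : ¬ q ≤ x := fun h => hyx (hyq.trans h)
  have hpy : ¬ p ≤ y := fun h => hxy (hxp.trans h)
  have hqy : ¬ q ≤ y := fun h => hxy (hxq.trans h)
  refine fun h => h ⟨4, ![x, p, y, q], le_rfl, ?_, ?_⟩
  -- `ZMod 4` is `Fin 4` by definition; over `Fin 4` the index arithmetic evaluates.
  · show Function.Injective (![x, p, y, q] : Fin 4 → P)
    intro i j hij
    fin_cases i <;> fin_cases j <;> simp [*, ne_of_not_le, ne_of_not_ge] at hij ⊢
  · show ∀ i j : Fin 4,
      (compGraph P).Adj (![x, p, y, q] i) (![x, p, y, q] j) ↔ (j = i + 1 ∨ i = j + 1)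
    intro i j
    fin_cases i <;> fin_cases j <;> simp [*, ne_of_not_le, ne_of_not_ge]

theorem not_chordal_compGraph_finset_fin_three : ¬ (compGraph (Finset (Fin 3))).Chordal := by
  let f : Fin 6 → Finset (Fin 3) := ![{0}, {0, 1}, {1}, {1, 2}, {2}, {2, 0}]
  refine fun h => h ⟨6, f, by norm_num, ?_, ?_⟩
  · show Function.Injective f
    decide
  · show ∀ i j : Fin 6, (compGraph _).Adj (f i) (f j) ↔ (j = i + 1 ∨ i = j + 1)
    decide

end ComparabilityGraph

section Hexagon

variable {ι L : Type*} [Lattice L] [OrderBot L]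

def Finset.supOrderEmbedding [Fintype ι] [DecidableEq ι] (w : ι → L)
    (hw : ∀ i, ¬ w i ≤ (Finset.univ.erase i).sup w) : Finset ι ↪o L :=
  OrderEmbedding.ofMapLEIff (fun s => s.sup w) fun _ _ =>
    ⟨fun h i hi => by_contra fun hit => hw i <| (Finset.le_sup hi).trans <| h.trans <|
        Finset.sup_mono fun j hj => Finset.mem_erase.2 ⟨fun hji => hit (hji ▸ hj), by simp⟩,
      Finset.sup_mono⟩

theorem not_chordal_of_not_le_sup {x y z : L} (hx : ¬ x ≤ y ⊔ z) (hy : ¬ y ≤ x ⊔ z)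
    (hz : ¬ z ≤ x ⊔ y) : ¬ (compGraph L).Chordal := by
  have hw : ∀ i, ¬ ![x, y, z] i ≤ (Finset.univ.erase i).sup ![x, y, z] := by
    intro i
    fin_cases i <;> simp only [Fin.zero_eta, Fin.mk_one, Fin.reduceFinMk]
    · rw [show Finset.univ.erase (0 : Fin 3) = {1, 2} by decide]; simpa using hx
    · rw [show Finset.univ.erase (1 : Fin 3) = {0, 2} by decide]; simpa using hy
    · rw [show Finset.univ.erase (2 : Fin 3) = {0, 1} by decide]; simpa using hz
  exact fun h => not_chordal_compGraph_finset_fin_three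
    (h.comap (Finset.supOrderEmbedding _ hw).compGraphEmbedding)

end Hexagon

section FinTwoProd

variable {β : Type*} [LinearOrder β]

theorem Prod.le_total_of_fst_eq {α : Type*} [Preorder α] {x y : α × β} (h : x.1 = y.1) :
    x ≤ y ∨ y ≤ x :=
  (le_total x.2 y.2).imp (fun h₂ => ⟨h.le, h₂⟩) fun h₂ => ⟨h.ge, h₂⟩

theorem fst_eq_one_of_le_of_le {x y z : Fin 2 × β} (hxy : ¬ (x ≤ y ∨ y ≤ x)) (hxz : x ≤ z)
    (hyz : y ≤ z) : z.1 = 1 := by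
  have hne : x.1 ≠ y.1 := fun h => hxy (Prod.le_total_of_fst_eq h)
  have := hxz.1
  have := hyz.1
  omega

theorem fst_eq_zero_of_le_of_le {x y z : Fin 2 × β} (hxy : ¬ (x ≤ y ∨ y ≤ x)) (hzx : z ≤ x)
    (hzy : z ≤ y) : z.1 = 0 := by
  have hne : x.1 ≠ y.1 := fun h => hxy (Prod.le_total_of_fst_eq h)
  have := hzx.1
  have := hzy.1
  omega

theorem not_isInducedCycle_four_fin_two_prod (f : ZMod 4 → Fin 2 × β) :
    ¬ IsInducedCycle (compGraph (Fin 2 × β)) 4 f := by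
  intro hf
  have h02 : ¬ (f 0 ≤ f 2 ∨ f 2 ≤ f 0) := by rw [hf.comparable_iff]; decide
  have h13 : ¬ (f 1 ≤ f 3 ∨ f 3 ≤ f 1) := by rw [hf.comparable_iff]; decide
  rcases le_and_le_or_le_and_le_of_not_comparable h02 ((hf.comparable_iff 0 1).2 (by decide))
      ((hf.comparable_iff 2 1).2 (by decide)) with ⟨h01, h21⟩ | ⟨h10, h12⟩ <;>
    rcases le_and_le_or_le_and_le_of_not_comparable h02 ((hf.comparable_iff 0 3).2 (by decide))
      ((hf.comparable_iff 2 3).2 (by decide)) with ⟨h03, h23⟩ | ⟨h30, h32⟩ <;>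
    apply h13
  · exact Prod.le_total_of_fst_eq <|
      (fst_eq_one_of_le_of_le h02 h01 h21).trans (fst_eq_one_of_le_of_le h02 h03 h23).symm
  · exact .inr (h30.trans h01)
  · exact .inl (h10.trans h03)
  · exact Prod.le_total_of_fst_eq <|
      (fst_eq_zero_of_le_of_le h02 h10 h12).trans (fst_eq_zero_of_le_of_le h02 h30 h32).symm

theorem compGraph_fin_two_prod_chordal : (compGraph (Fin 2 × β)).Chordal := by
  rintro ⟨n, f, hn, hf⟩
  rcases hn.eq_or_lt with rfl | hn
  · exact not_isInducedCycle_four_fin_two_prod f hf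
  · obtain ⟨i, j, hij, hne, hji, hij'⟩ := ZMod.exists_eq_of_fin_two_of_five_le hn fun i => (f i).1
    rcases (hf.comparable_iff i j).1 (Prod.le_total_of_fst_eq hij) with h | h | h <;> contradiction

end FinTwoProd

section Lattice

variable {L : Type*}

def IsApex [PartialOrder L] [BoundedOrder L] (a : L) : Prop :=
  a ≠ ⊥ ∧ a ≠ ⊤ ∧ ∀ x, a ≤ x ∨ x ≤ a

theorem isApex_toDual_iff [PartialOrder L] [BoundedOrder L] {a : L} :
    IsApex (OrderDual.toDual a) ↔ IsApex a :=
  ⟨fun ⟨hb, ht, h⟩ => ⟨ht, hb, fun x => (h (OrderDual.toDual x)).symm⟩,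
    fun ⟨hb, ht, h⟩ => ⟨ht, hb, fun x => (h x.ofDual).symm⟩⟩

theorem exists_ne_bot_ne_top_of_three_le_card [PartialOrder L] [BoundedOrder L] [Fintype L]
    (h : 3 ≤ Fintype.card L) : ∃ x : L, x ≠ ⊥ ∧ x ≠ ⊤ := by
  classical
  obtain ⟨x, -, hx⟩ := Finset.exists_mem_notMem_of_card_lt_card (s := ({⊥, ⊤} : Finset L))
    (t := Finset.univ) (Finset.card_le_two.trans_lt (by rw [Finset.card_univ]; omega))
  exact ⟨x, by simpa [not_or] using hx⟩

theorem exists_atom_ne_atom [PartialOrder L] [BoundedOrder L] [IsAtomic L]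
    (hL : ∀ a : L, ¬ IsApex a) {x : L} (hxb : x ≠ ⊥) (hxt : x ≠ ⊤) :
    ∃ a b : L, IsAtom a ∧ IsAtom b ∧ a ≠ b := by
  obtain ⟨a, ha, hax⟩ := (eq_bot_or_exists_atom_le x).resolve_left hxb
  have hat : a ≠ ⊤ := fun h => hxt (top_le_iff.1 (h ▸ hax))
  obtain ⟨y, hay, hya⟩ : ∃ y, ¬ a ≤ y ∧ ¬ y ≤ a := by
    by_contra! h
    exact hL a ⟨ha.1, hat, fun y => (em (a ≤ y)).imp id (h y)⟩
  obtain ⟨b, hb, hby⟩ := (eq_bot_or_exists_atom_le y).resolve_left fun h => hya (h ▸ bot_le)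
  exact ⟨a, b, ha, hb, fun h => hay (h ▸ hby)⟩

theorem exists_coatom_ne_coatom [PartialOrder L] [BoundedOrder L] [IsCoatomic L]
    (hL : ∀ a : L, ¬ IsApex a) {x : L} (hxb : x ≠ ⊥) (hxt : x ≠ ⊤) :
    ∃ u v : L, IsCoatom u ∧ IsCoatom v ∧ u ≠ v := by
  obtain ⟨a, b, ha, hb, hab⟩ := exists_atom_ne_atom (L := Lᵒᵈ)
    (fun a => isApex_toDual_iff.not.2 (hL a.ofDual)) (x := OrderDual.toDual x) hxt hxb
  exact ⟨a.ofDual, b.ofDual, isAtom_dual_iff_isCoatom.1 ha, isAtom_dual_iff_isCoatom.1 hb, hab⟩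

theorem le_total_of_le_of_atom_not_le [DistribLattice L] [OrderBot L]
    (hL : (compGraph L).Chordal) {a v : L} (ha : IsAtom a) (hav : ¬ a ≤ v) {x y : L}
    (hx : x ≤ v) (hy : y ≤ v) : x ≤ y ∨ y ≤ x := by
  by_contra! h
  have hxa : Disjoint x a := (ha.not_le_iff_disjoint.1 fun h' => hav (h'.trans hx)).symm
  have hya : Disjoint y a := (ha.not_le_iff_disjoint.1 fun h' => hav (h'.trans hy)).symm
  refine not_chordal_of_not_le_sup (x := x) (y := y) (z := a) ?_ ?_ ?_ hL
  · exact fun h' => h.1 (hxa.left_le_of_le_sup_right h')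
  · exact fun h' => h.2 (hya.left_le_of_le_sup_right h')
  · exact fun h' => hav (h'.trans (sup_le hx hy))

theorem IsCompl.inf_sup_inf_eq [DistribLattice L] [BoundedOrder L] {a b : L} (h : IsCompl a b)
    (x : L) : x ⊓ a ⊔ x ⊓ b = x := by
  rw [← inf_sup_left, h.sup_eq_top, inf_top_eq]

def IsCompl.orderIsoIicProdIic [DistribLattice L] [BoundedOrder L] {a b : L} (h : IsCompl a b) :
    L ≃o Set.Iic a × Set.Iic b where
  toFun x := (⟨x ⊓ a, inf_le_right⟩, ⟨x ⊓ b, inf_le_right⟩)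
  invFun p := p.1 ⊔ p.2
  left_inv := h.inf_sup_inf_eq
  right_inv := by
    rintro ⟨⟨s, hs⟩, ⟨t, ht⟩⟩
    have hsb : s ⊓ b = ⊥ := (h.disjoint.mono_left hs).eq_bot
    have hta : t ⊓ a = ⊥ := (h.disjoint.symm.mono_left ht).eq_bot
    ext <;> simp [inf_sup_right, inf_eq_left.2 hs, inf_eq_left.2 ht, hsb, hta]
  map_rel_iff' {x y} := by
    refine ⟨fun hxy => ?_, fun hxy => ⟨inf_le_inf_right a hxy, inf_le_inf_right b hxy⟩⟩
    rw [← h.inf_sup_inf_eq x, ← h.inf_sup_inf_eq y]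
    exact sup_le_sup hxy.1 hxy.2

def OrderIso.prodCongr {α β γ δ : Type*} [Preorder α] [Preorder β] [Preorder γ] [Preorder δ]
    (e₁ : α ≃o β) (e₂ : γ ≃o δ) : α × γ ≃o β × δ where
  toEquiv := e₁.toEquiv.prodCongr e₂.toEquiv
  map_rel_iff' := by simp [Prod.le_def]

theorem nonempty_orderIso_fin_of_total {α : Type*} [PartialOrder α] [Finite α]
    (htot : ∀ x y : α, x ≤ y ∨ y ≤ x) {k : ℕ} (hk : Nat.card α = k) : Nonempty (α ≃o Fin k) := by
  classical
  let : LinearOrder α := { le_total := htot, toDecidableLE := inferInstance }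
  let := Fintype.ofFinite α
  exact ⟨(Fintype.orderIsoFinOfCardEq α (Nat.card_eq_fintype_card.symm.trans hk)).symm⟩

theorem exists_orderIso_fin_two_prod_of_chordal [DistribLattice L] [BoundedOrder L] [Finite L]
    (hL : ∀ a : L, ¬ IsApex a) {x : L} (hxb : x ≠ ⊥) (hxt : x ≠ ⊤) (hch : (compGraph L).Chordal) :
    ∃ N, Nonempty (L ≃o Fin 2 × Fin N) := by
  classical
  obtain ⟨a, v, ha, hv, hav⟩ : ∃ a v : L, IsAtom a ∧ IsCoatom v ∧ ¬ a ≤ v := by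
    by_contra! h
    obtain ⟨a, b, ha, hb, hab⟩ := exists_atom_ne_atom hL hxb hxt
    obtain ⟨u, w, hu, hw, huw⟩ := exists_coatom_ne_coatom hL hxb hxt
    exact not_chordal_of_crown (mt (hb.le_iff_eq ha.1).1 hab) (mt (ha.le_iff_eq hb.1).1 hab.symm)
      (mt (hu.le_iff_eq hw.1).1 huw.symm) (mt (hw.le_iff_eq hu.1).1 huw)
      (h a u ha hu) (h a w ha hw) (h b u hb hu) (h b w hb hw) hch
  have hcompl : IsCompl a v := ⟨ha.not_le_iff_disjoint.1 hav, (hv.not_le_iff_codisjoint.1 hav).symm⟩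
  have : IsSimpleOrder (Set.Iic a) := Set.isSimpleOrder_Iic_iff_isAtom.2 ha
  obtain ⟨eA⟩ := nonempty_orderIso_fin_of_total (α := Set.Iic a) (k := 2)
    (fun s t => (IsSimpleOrder.eq_bot_or_eq_top s).elim (fun h => .inl (h ▸ bot_le))
      fun h => .inr (h ▸ le_top))
    ((Nat.card_congr IsSimpleOrder.equivBool).trans (by simp))
  obtain ⟨eV⟩ := nonempty_orderIso_fin_of_total (α := Set.Iic v)
    (fun s t => le_total_of_le_of_atom_not_le hch ha hav s.2 t.2) rfl
  exact ⟨_, ⟨hcompl.orderIsoIicProdIic.trans (eA.prodCongr eV)⟩⟩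

end Lattice

/-- Let `L` be a finite distributive lattice with at least three elements that is simple
(has no apex, i.e. no element other than `⊥` and `⊤` comparable to every element).  Then
the comparability graph of `L` is chordal iff `L` is order-isomorphic to
`Fin 2 × Fin (n+1)` (componentwise order) for some `n ≥ 1`, i.e. to the divisor lattice
`D_{2·3^n}`. -/
theorem statement8 {L : Type*} [DistribLattice L] [Fintype L] [BoundedOrder L]
    (hcard : 3 ≤ Fintype.card L)
    (hsimple : ¬ ∃ a : L, a ≠ ⊥ ∧ a ≠ ⊤ ∧ ∀ x : L, a ≤ x ∨ x ≤ a) :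
    (compGraph L).Chordal ↔
      ∃ n : ℕ, 1 ≤ n ∧ Nonempty (L ≃o Fin 2 × Fin (n + 1)) := by
  constructor
  · intro hch
    obtain ⟨x, hxb, hxt⟩ := exists_ne_bot_ne_top_of_three_le_card hcard
    obtain ⟨N, ⟨e⟩⟩ :=
      exists_orderIso_fin_two_prod_of_chordal (fun a ha => hsimple ⟨a, ha⟩) hxb hxt hch
    have hN : 3 ≤ 2 * N := by simpa using hcard.trans_eq (Fintype.card_congr e.toEquiv)
    obtain ⟨n, rfl⟩ : ∃ n, N = n + 1 := ⟨N - 1, by omega⟩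
    exact ⟨n, by omega, ⟨e⟩⟩
  · rintro ⟨n, -, ⟨e⟩⟩
    exact compGraph_fin_two_prod_chordal.comap e.toOrderEmbedding.compGraphEmbedding
end

section
/- Let P be a finite poset which is the union of two disjoint chains C : x₀ < x₁ < ⋯ < x_s and C' : y₀ < y₁ < ⋯ < y_t with s ≥ 1 and t ≥ 1 (order relations between elements of C and C' are allowed), and suppose that x₀ and y₀ are incomparable and that x_s and y_t are incomparable. Then the comparability graph of the distributive lattice J(P) of all lower sets (poset ideals) of P, ordered by inclusion, is not chordal: the four lower sets a = P \ {x_s}, b = P \ {y_t}, a' = {x₀}, b' = {y₀} form an induced 4-cycle. -/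
theorem isInducedCycle_four {V : Type*} (G : SimpleGraph V) {v : ZMod 4 → V}
    (h01 : G.Adj (v 0) (v 1)) (h12 : G.Adj (v 1) (v 2)) (h23 : G.Adj (v 2) (v 3))
    (h30 : G.Adj (v 3) (v 0)) (h02 : ¬ G.Adj (v 0) (v 2)) (h13 : ¬ G.Adj (v 1) (v 3))
    (hne02 : v 0 ≠ v 2) (hne13 : v 1 ≠ v 3) :
    IsInducedCycle G 4 v := by
  have hcases : ∀ k : ZMod 4, k = 0 ∨ k = 1 ∨ k = 2 ∨ k = 3 := by decide
  refine ⟨fun i j hij => ?_, fun i j => ?_⟩ <;>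
    rcases hcases i with rfl | rfl | rfl | rfl <;> rcases hcases j with rfl | rfl | rfl | rfl <;>
    simp_all [G.adj_comm, eq_comm] <;> decide

theorem IsInducedCycle.not_chordal {V : Type*} {G : SimpleGraph V} {n : ℕ} {f : ZMod n → V}
    (hf : IsInducedCycle G n f) (hn : 4 ≤ n) : ¬ G.Chordal :=
  fun hG => hG ⟨n, f, hn, hf⟩

theorem isMin_of_forall_le_or_le {P : Type*} [Preorder P] {a b : P}
    (hba : ¬ b ≤ a) (h : ∀ p, a ≤ p ∨ b ≤ p) : IsMin a :=
  fun p hp => (h p).resolve_right fun hbp => hba (hbp.trans hp)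

theorem isMax_of_forall_le_or_le {P : Type*} [Preorder P] {a b : P}
    (hab : ¬ a ≤ b) (h : ∀ p, p ≤ a ∨ p ≤ b) : IsMax a :=
  fun p hp => (h p).resolve_right fun hpb => hab (hp.trans hpb)

section

variable {P : Type*} [PartialOrder P] {a b : P}

theorem compGraph_adj_of_le (hab : a ≤ b) (hne : a ≠ b) :
    (compGraph P).Adj a b :=
  ⟨hne, .inl hab⟩

theorem compGraph_not_adj_of_incompRel (h : IncompRel (· ≤ ·) a b) :
    ¬ (compGraph P).Adj a b :=
  fun hab => hab.2.elim h.1 h.2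

theorem isInducedCycle_compGraph_four {v : ZMod 4 → P}
    (h01 : v 0 ≤ v 1) (h21 : v 2 ≤ v 1) (h23 : v 2 ≤ v 3) (h03 : v 0 ≤ v 3)
    (h02 : IncompRel (· ≤ ·) (v 0) (v 2)) (h13 : IncompRel (· ≤ ·) (v 1) (v 3)) :
    IsInducedCycle (compGraph P) 4 v := by
  refine isInducedCycle_four _ (compGraph_adj_of_le h01 ?_) (compGraph_adj_of_le h21 ?_).symm
    (compGraph_adj_of_le h23 ?_) (compGraph_adj_of_le h03 ?_).symm
    (compGraph_not_adj_of_incompRel h02) (compGraph_not_adj_of_incompRel h13) h02.ne h13.ne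
  all_goals intro h
  · exact h02.2 (h ▸ h21)
  · exact h02.1 (h ▸ h01)
  · exact h02.1 (h ▸ h03)
  · exact h02.2 (h.symm ▸ h23)

theorem isInducedCycle_compGraph_lowerSet {a₁ a₂ b₁ b₂ : P}
    (ha : IncompRel (· ≤ ·) a₁ a₂) (hb : IncompRel (· ≤ ·) b₁ b₂)
    (h₁₁ : ¬ b₁ ≤ a₁) (h₁₂ : ¬ b₁ ≤ a₂) (h₂₁ : ¬ b₂ ≤ a₁) (h₂₂ : ¬ b₂ ≤ a₂)
    {v : ZMod 4 → LowerSet P} (h0 : v 0 = .Iic a₁) (h1 : v 1 = (UpperSet.Ici b₁).compl)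
    (h2 : v 2 = .Iic a₂) (h3 : v 3 = (UpperSet.Ici b₂).compl) :
    IsInducedCycle (compGraph (LowerSet P)) 4 v := by
  apply isInducedCycle_compGraph_four <;>
    simp only [h0, h1, h2, h3, IncompRel, LowerSet.Iic_le, UpperSet.mem_compl_iff,
      UpperSet.mem_Ici_iff, UpperSet.compl_le_compl, UpperSet.le_Ici, LowerSet.mem_Iic_iff]
  exacts [h₁₁, h₁₂, h₂₂, h₂₁, ha, hb]

theorem IsMin.isLowerSet_singleton (h : IsMin a) : IsLowerSet {a} :=
  h.Iic_eq ▸ isLowerSet_Iic a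

theorem IsMax.isLowerSet_univ_sdiff_singleton (h : IsMax a) : IsLowerSet (Set.univ \ {a}) :=
  Set.compl_eq_univ_sdiff {a} ▸ h.Ici_eq ▸ (isUpperSet_Ici a).compl

theorem IsMin.lowerSet_Iic_eq (h : IsMin a) :
    LowerSet.Iic a = ⟨{a}, h.isLowerSet_singleton⟩ :=
  SetLike.coe_injective h.Iic_eq

theorem IsMax.upperSet_Ici_compl_eq (h : IsMax a) :
    (UpperSet.Ici a).compl = ⟨Set.univ \ {a}, h.isLowerSet_univ_sdiff_singleton⟩ :=
  SetLike.coe_injective <| by simp [h.Ici_eq, Set.compl_eq_univ_sdiff]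

end

theorem statement11_general {P : Type*} [PartialOrder P]
    (s t : ℕ) (hs : 1 ≤ s) (ht : 1 ≤ t)
    (x : Fin (s + 1) → P) (y : Fin (t + 1) → P)
    (hx : StrictMono x) (hy : StrictMono y)
    (hcover : ∀ p : P, (∃ i, p = x i) ∨ (∃ j, p = y j))
    (hbot : ¬ x 0 ≤ y 0 ∧ ¬ y 0 ≤ x 0)
    (htop : ¬ x (Fin.last s) ≤ y (Fin.last t) ∧ ¬ y (Fin.last t) ≤ x (Fin.last s)) :
    ∃ (ha : IsLowerSet (Set.univ \ {x (Fin.last s)}))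
      (hb : IsLowerSet (Set.univ \ {y (Fin.last t)}))
      (ha' : IsLowerSet ({x 0} : Set P)) (hb' : IsLowerSet ({y 0} : Set P)),
      IsInducedCycle (compGraph (LowerSet P)) 4
        (fun i : ZMod 4 =>
          if i = 0 then (⟨{x 0}, ha'⟩ : LowerSet P)
          else if i = 1 then ⟨Set.univ \ {x (Fin.last s)}, ha⟩
          else if i = 2 then ⟨{y 0}, hb'⟩
          else ⟨Set.univ \ {y (Fin.last t)}, hb⟩) ∧
      ¬ (compGraph (LowerSet P)).Chordal := by
  have hx₀ : x 0 < x (Fin.last s) := hx (Fin.lt_def.2 hs)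
  have hy₀ : y 0 < y (Fin.last t) := hy (Fin.lt_def.2 ht)
  have hbelow : ∀ p, x 0 ≤ p ∨ y 0 ≤ p := fun p => by
    rcases hcover p with ⟨i, rfl⟩ | ⟨j, rfl⟩
    exacts [.inl (hx.monotone (Fin.zero_le i)), .inr (hy.monotone (Fin.zero_le j))]
  have habove : ∀ p, p ≤ x (Fin.last s) ∨ p ≤ y (Fin.last t) := fun p => by
    rcases hcover p with ⟨i, rfl⟩ | ⟨j, rfl⟩
    exacts [.inl (hx.monotone (Fin.le_last i)), .inr (hy.monotone (Fin.le_last j))]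
  have hminx := isMin_of_forall_le_or_le hbot.2 hbelow
  have hminy := isMin_of_forall_le_or_le hbot.1 fun p => (hbelow p).symm
  have hmaxx := isMax_of_forall_le_or_le htop.1 habove
  have hmaxy := isMax_of_forall_le_or_le htop.2 fun p => (habove p).symm
  refine ⟨hmaxx.isLowerSet_univ_sdiff_singleton, hmaxy.isLowerSet_univ_sdiff_singleton,
    hminx.isLowerSet_singleton, hminy.isLowerSet_singleton, ?_⟩
  refine (fun hcycle => ⟨hcycle, hcycle.not_chordal le_rfl⟩) ?_
  exact isInducedCycle_compGraph_lowerSet hbot htop hx₀.not_ge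
    (fun h => hbot.1 (hx₀.le.trans h)) (fun h => hbot.2 (hy₀.le.trans h)) hy₀.not_ge
    hminx.lowerSet_Iic_eq.symm hmaxx.upperSet_Ici_compl_eq.symm hminy.lowerSet_Iic_eq.symm
    hmaxy.upperSet_Ici_compl_eq.symm

/-- Let `P` be a finite poset which is the union of two disjoint chains
`x₀ < x₁ < ⋯ < x_s` and `y₀ < y₁ < ⋯ < y_t` with `s, t ≥ 1`, such that `x₀, y₀` are
incomparable and `x_s, y_t` are incomparable.  Then the comparability graph of the
distributive lattice `J(P)` of lower sets of `P`, ordered by inclusion, is not chordal: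
the four lower sets `a = P \ {x_s}`, `b = P \ {y_t}`, `a' = {x₀}`, `b' = {y₀}` form an
induced 4-cycle. -/
theorem statement11 {P : Type*} [PartialOrder P] [Fintype P]
    (s t : ℕ) (hs : 1 ≤ s) (ht : 1 ≤ t)
    (x : Fin (s + 1) → P) (y : Fin (t + 1) → P)
    (hx : StrictMono x) (hy : StrictMono y)
    (hdisj : ∀ i j, x i ≠ y j)
    (hcover : ∀ p : P, (∃ i, p = x i) ∨ (∃ j, p = y j))
    (hbot : ¬ x 0 ≤ y 0 ∧ ¬ y 0 ≤ x 0)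
    (htop : ¬ x (Fin.last s) ≤ y (Fin.last t) ∧ ¬ y (Fin.last t) ≤ x (Fin.last s)) :
    ∃ (ha : IsLowerSet (Set.univ \ {x (Fin.last s)}))
      (hb : IsLowerSet (Set.univ \ {y (Fin.last t)}))
      (ha' : IsLowerSet ({x 0} : Set P)) (hb' : IsLowerSet ({y 0} : Set P)),
      IsInducedCycle (compGraph (LowerSet P)) 4
        (fun i : ZMod 4 =>
          if i = 0 then (⟨{x 0}, ha'⟩ : LowerSet P)
          else if i = 1 then ⟨Set.univ \ {x (Fin.last s)}, ha⟩
          else if i = 2 then ⟨{y 0}, hb'⟩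
          else ⟨Set.univ \ {y (Fin.last t)}, hb⟩) ∧
      ¬ (compGraph (LowerSet P)).Chordal :=
  statement11_general s t hs ht x y hx hy hcover hbot htop
end

section
/- Let P be a finite nonempty poset that is the ordinal sum of antichains, i.e., for all x, y ∈ P one has x < y if and only if rank_P(x) < rank_P(y), and suppose P is not an antichain. Then the set A₀ = {x ∈ P : rank_P(x) = 0} is a lower set of P with ∅ ≠ A₀ ≠ P that is comparable under inclusion to every lower set of P; in particular, A₀ is an apex of the distributive lattice J(P) of lower sets of P, so J(P) is not simple. -/
open Order

section Height

variable {α : Type*} [Preorder α]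

lemma isLowerSet_setOf_height_eq_zero : IsLowerSet {x : α | height x = 0} :=
  fun _ _ hba ha => height_eq_zero.mpr ((height_eq_zero.mp ha).mono hba)

/-- A longest chain ending at `a` starts at a minimal element. -/
lemma exists_height_eq_zero_le_of_height_lt_top {a : α} (ha : height a < ⊤) :
    ∃ m ≤ a, height m = 0 := by
  obtain ⟨n, hn⟩ := ENat.ne_top_iff_exists.mp ha.ne
  obtain ⟨p, hlast, hlen⟩ := exists_series_of_height_eq_coe a hn.symm
  refine ⟨p.head, hlast ▸ p.head_le_last, ?_⟩
  have hp : p.length = height p.last := by rw [hlast, hlen, hn]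
  simpa [RelSeries.head] using height_eq_index_of_length_eq_height_last hp 0

lemma setOf_height_eq_zero_ne_univ {a b : α} (hab : a < b) :
    {x : α | height x = 0} ≠ Set.univ := fun h =>
  height_ne_zero.mpr hab.not_isMin (Set.eq_univ_iff_forall.mp h b)

/-- A lower set missing a minimal element `z` contains nothing of positive height, since that
would lie above `z`. -/
lemma setOf_height_eq_zero_subset_or_subset
    (hrank : ∀ x y : α, height x < height y → x < y) {S : Set α} (hS : IsLowerSet S) :
    {x : α | height x = 0} ⊆ S ∨ S ⊆ {x : α | height x = 0} := by
  refine or_iff_not_imp_left.mpr fun h s hs => ?_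
  obtain ⟨z, hz, hzS⟩ := Set.not_subset.mp h
  by_contra hs0
  exact hzS (hS (hrank z s ((hz : height z = 0) ▸ pos_iff_ne_zero.mpr hs0)).le hs)

end Height

lemma exists_lt_of_not_isAntichain_univ {α : Type*} [PartialOrder α]
    (h : ¬ IsAntichain (· ≤ ·) (Set.univ : Set α)) : ∃ a b : α, a < b := by
  simp only [IsAntichain, Set.Pairwise, Set.mem_univ, true_implies, not_forall] at h
  obtain ⟨a, b, hab, hle⟩ := h
  exact ⟨a, b, lt_of_le_of_ne (not_not.mp hle) hab⟩

theorem statement13_general {P : Type*} [PartialOrder P]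
    (hsum : ∀ x y : P, x < y ↔ Order.height x < Order.height y)
    (hna : ¬ IsAntichain (· ≤ ·) (Set.univ : Set P)) :
    IsLowerSet {x : P | Order.height x = 0} ∧
    ({x : P | Order.height x = 0}).Nonempty ∧
    {x : P | Order.height x = 0} ≠ Set.univ ∧
    (∀ S : Set P, IsLowerSet S →
      {x : P | Order.height x = 0} ⊆ S ∨ S ⊆ {x : P | Order.height x = 0}) ∧
    (∀ A : LowerSet P, (A : Set P) = {x : P | Order.height x = 0} →
      A ≠ ⊥ ∧ A ≠ ⊤ ∧ ∀ B : LowerSet P, A ≤ B ∨ B ≤ A) := by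
  obtain ⟨a, b, hab⟩ := exists_lt_of_not_isAntichain_univ hna
  have hne : ({x : P | height x = 0}).Nonempty := by
    obtain ⟨m, -, hm⟩ :=
      exists_height_eq_zero_le_of_height_lt_top ((hsum a b).mp hab |>.trans_le le_top)
    exact ⟨m, hm⟩
  have hcmp := fun S (hS : IsLowerSet S) =>
    setOf_height_eq_zero_subset_or_subset (fun x y => (hsum x y).mpr) hS
  refine ⟨isLowerSet_setOf_height_eq_zero, hne, setOf_height_eq_zero_ne_univ hab, hcmp,
    fun A hA => ⟨?_, ?_, fun B => ?_⟩⟩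
  · rw [Ne, ← LowerSet.coe_eq_empty, hA]
    exact hne.ne_empty
  · rw [Ne, ← LowerSet.coe_eq_univ, hA]
    exact setOf_height_eq_zero_ne_univ hab
  · simpa only [← LowerSet.coe_subset_coe, hA] using hcmp B B.lower

/-- Let `P` be a finite nonempty poset that is the ordinal sum of antichains, i.e.
`x < y` iff `rank_P(x) < rank_P(y)` (rank being the height `Order.height`), and suppose
`P` is not an antichain.  Then `A₀ = {x : rank_P(x) = 0}` is a lower set of `P` with
`∅ ≠ A₀ ≠ P` that is comparable under inclusion to every lower set of `P`; in particular
`A₀` is an apex of the distributive lattice `J(P)` of lower sets of `P` (the lattice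
`LowerSet P`), so `J(P)` is not simple. -/
theorem statement13 {P : Type*} [PartialOrder P] [Fintype P] [Nonempty P]
    (hsum : ∀ x y : P, x < y ↔ Order.height x < Order.height y)
    (hna : ¬ IsAntichain (· ≤ ·) (Set.univ : Set P)) :
    IsLowerSet {x : P | Order.height x = 0} ∧
    ({x : P | Order.height x = 0}).Nonempty ∧
    {x : P | Order.height x = 0} ≠ Set.univ ∧
    (∀ S : Set P, IsLowerSet S →
      {x : P | Order.height x = 0} ⊆ S ∨ S ⊆ {x : P | Order.height x = 0}) ∧
    (∀ A : LowerSet P, (A : Set P) = {x : P | Order.height x = 0} →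
      A ≠ ⊥ ∧ A ≠ ⊤ ∧ ∀ B : LowerSet P, A ≤ B ∨ B ≤ A) :=
  statement13_general hsum hna
end
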